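/- arXiv:2111.04411 — 6 statements merged into one kernel-verified Lean document; each statement's English description precedes it below -/
import Mathlib

section
/- Let V₁ and V₂ be finite-dimensional real normed spaces, let F₁ : V₁ → ℝ and F₂ : V₂ → ℝ be continuous, positively 1-homogeneous functions with Fᵢ(u) > 0 for all u ≠ 0, and let μ : V₁ → V₂ be a surjective linear map. Then μ({u ∈ V₁ : F₁(u) ≤ 1}) = {v ∈ V₂ : F₂(v) ≤ 1} if and only if F₂(v) = inf{F₁(u) : u ∈ V₁, μ(u) = v} for all v ∈ V₂. -/
open Bornology

set_option linter.unusedSectionVars false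

section Aux

variable {V : Type*} [NormedAddCommGroup V] [NormedSpace ℝ V] [FiniteDimensional ℝ V]

lemma homog_zero' (F : V → ℝ) (hF : ∀ l : ℝ, 0 < l → ∀ u, F (l • u) = l * F u) :
    F 0 = 0 := by
  have := hF 2 two_pos 0
  simp only [smul_zero] at this
  linarith

lemma homog_nonneg' (F : V → ℝ) (hF : ∀ l : ℝ, 0 < l → ∀ u, F (l • u) = l * F u)
    (hp : ∀ u : V, u ≠ 0 → 0 < F u) (u : V) : 0 ≤ F u := by
  rcases eq_or_ne u 0 with rfl | h
  · rw [homog_zero' F hF]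
  · exact (hp u h).le

lemma sublevel_bounded' (F : V → ℝ) (hc : Continuous F)
    (hF : ∀ l : ℝ, 0 < l → ∀ u, F (l • u) = l * F u)
    (hp : ∀ u : V, u ≠ 0 → 0 < F u) (r : ℝ) :
    IsBounded {u : V | F u ≤ r} := by
  rcases subsingleton_or_nontrivial V with hV | hV
  · exact Bornology.isBounded_singleton (x := (0 : V)) |>.subset
      (fun x _ => by simp [Subsingleton.elim x (0 : V)])
  · have hsne : (Metric.sphere (0 : V) 1).Nonempty :=
      NormedSpace.sphere_nonempty.mpr (by norm_num)
    obtain ⟨x, hx, hxmin⟩ := (isCompact_sphere (0 : V) 1).exists_isMinOn hsne hc.continuousOn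
    have hxnorm : ‖x‖ = 1 := by simpa using hx
    have hxne : x ≠ 0 := by intro h; rw [h] at hxnorm; simp at hxnorm
    have hcpos : 0 < F x := hp x hxne
    rw [isBounded_iff_forall_norm_le]
    refine ⟨max (r / F x) 0, fun u hu => ?_⟩
    rcases eq_or_ne u 0 with rfl | hune
    · simp
    · have hn : (0 : ℝ) < ‖u‖ := norm_pos_iff.mpr hune
      have hunit : ‖u‖⁻¹ • u ∈ Metric.sphere (0 : V) 1 := by
        simp [norm_smul, abs_of_pos (inv_pos.mpr hn), inv_mul_cancel₀ hn.ne']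
      have heq : F u = ‖u‖ * F (‖u‖⁻¹ • u) := by
        have := hF ‖u‖ hn (‖u‖⁻¹ • u)
        rwa [smul_smul, mul_inv_cancel₀ hn.ne', one_smul] at this
      have hle : F x ≤ F (‖u‖⁻¹ • u) := isMinOn_iff.mp hxmin _ hunit
      have h1 : ‖u‖ * F x ≤ F u := by
        rw [heq]; exact mul_le_mul_of_nonneg_left hle hn.le
      have h2 : ‖u‖ * F x ≤ r := h1.trans hu
      have : ‖u‖ ≤ r / F x := (le_div_iff₀ hcpos).mpr h2
      exact this.trans (le_max_left _ _)

lemma exists_min' (F : V → ℝ) (hc : Continuous F)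
    (hF : ∀ l : ℝ, 0 < l → ∀ u, F (l • u) = l * F u)
    (hp : ∀ u : V, u ≠ 0 → 0 < F u) (S : Set V) (hS : IsClosed S) (hne : S.Nonempty) :
    ∃ u ∈ S, ∀ u' ∈ S, F u ≤ F u' := by
  obtain ⟨u₀, hu₀⟩ := hne
  have hKc : IsCompact (S ∩ {u | F u ≤ F u₀}) :=
    Metric.isCompact_of_isClosed_isBounded
      (hS.inter (isClosed_le hc continuous_const))
      ((sublevel_bounded' F hc hF hp (F u₀)).subset Set.inter_subset_right)
  obtain ⟨u, huK, hmin⟩ := hKc.exists_isMinOn ⟨u₀, by exact ⟨hu₀, (by simp : u₀ ∈ {u | F u ≤ F u₀})⟩⟩ hc.continuousOn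
  refine ⟨u, huK.1, fun u' hu' => ?_⟩
  by_cases h : F u' ≤ F u₀
  · exact isMinOn_iff.mp hmin u' ⟨hu', h⟩
  · exact le_trans (isMinOn_iff.mp hmin u₀ ⟨hu₀, (by simp : u₀ ∈ {u | F u ≤ F u₀})⟩) (le_of_not_ge h)

end Aux

/-- For a surjective linear map μ between finite-dimensional normed spaces carrying
continuous, positively 1-homogeneous, positive-off-zero functions F₁, F₂:
μ maps the closed unit ball of F₁ onto that of F₂ iff F₂ is the fibrewise infimum of F₁. -/
theorem stmt_3 {V₁ V₂ : Type*}
    [NormedAddCommGroup V₁] [NormedSpace ℝ V₁] [FiniteDimensional ℝ V₁]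
    [NormedAddCommGroup V₂] [NormedSpace ℝ V₂] [FiniteDimensional ℝ V₂]
    (F₁ : V₁ → ℝ) (F₂ : V₂ → ℝ) (hF₁c : Continuous F₁) (hF₂c : Continuous F₂)
    (hF₁h : ∀ l : ℝ, 0 < l → ∀ u, F₁ (l • u) = l * F₁ u)
    (hF₂h : ∀ l : ℝ, 0 < l → ∀ v, F₂ (l • v) = l * F₂ v)
    (hF₁p : ∀ u : V₁, u ≠ 0 → 0 < F₁ u)
    (hF₂p : ∀ v : V₂, v ≠ 0 → 0 < F₂ v)
    (μ : V₁ →ₗ[ℝ] V₂) (hsurj : Function.Surjective μ) :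
    μ '' {u | F₁ u ≤ 1} = {v | F₂ v ≤ 1} ↔
      ∀ v : V₂, F₂ v = sInf (F₁ '' {u | μ u = v}) := by
  have hbdd : ∀ v : V₂, BddBelow (F₁ '' {u | μ u = v}) := by
    intro v
    exact ⟨0, by rintro b ⟨u', _, rfl⟩; exact homog_nonneg' F₁ hF₁h hF₁p u'⟩
  have key : ∀ v : V₂, ∃ u, μ u = v ∧ F₁ u = sInf (F₁ '' {u | μ u = v}) := by
    intro v
    have hSc : IsClosed {u : V₁ | μ u = v} :=
      isClosed_eq μ.continuous_of_finiteDimensional continuous_const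
    have hne : Set.Nonempty {u : V₁ | μ u = v} := hsurj v
    obtain ⟨u, hu, hmin⟩ := exists_min' F₁ hF₁c hF₁h hF₁p _ hSc hne
    refine ⟨u, hu, le_antisymm ?_ ?_⟩
    · apply le_csInf (hne.image _)
      rintro b ⟨u', hu', rfl⟩
      exact hmin u' hu'
    · exact csInf_le (hbdd v) ⟨u, hu, rfl⟩
  constructor
  · intro h v
    rcases eq_or_ne v 0 with rfl | hv
    · rw [homog_zero' F₂ hF₂h]
      refine le_antisymm (le_csInf (Set.Nonempty.image F₁ (show Set.Nonempty {u | μ u = 0} from hsurj 0)) ?_) (csInf_le (hbdd 0) ?_)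
      · rintro b ⟨u', _, rfl⟩; exact homog_nonneg' F₁ hF₁h hF₁p u'
      · exact ⟨0, by simp, homog_zero' F₁ hF₁h⟩
    · obtain ⟨u₀, hu₀, hinf⟩ := key v
      have hu₀ne : u₀ ≠ 0 := fun h' => hv (by rw [← hu₀, h', map_zero])
      have hs : 0 < F₁ u₀ := hF₁p u₀ hu₀ne
      have ht : 0 < F₂ v := hF₂p v hv
      -- F₂ v ≤ F₁ u₀
      have h1 : F₂ v ≤ F₁ u₀ := by
        have hmem : ((F₁ u₀)⁻¹ • v) ∈ {v | F₂ v ≤ 1} := by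
          rw [← h]
          refine ⟨(F₁ u₀)⁻¹ • u₀, ?_, by rw [map_smul, hu₀]⟩
          show F₁ _ ≤ 1
          rw [hF₁h _ (inv_pos.mpr hs), inv_mul_cancel₀ hs.ne']
        have : F₂ ((F₁ u₀)⁻¹ • v) ≤ 1 := hmem
        rw [hF₂h _ (inv_pos.mpr hs)] at this
        calc F₂ v = F₁ u₀ * ((F₁ u₀)⁻¹ * F₂ v) := by field_simp
        _ ≤ F₁ u₀ * 1 := mul_le_mul_of_nonneg_left this hs.le
        _ = F₁ u₀ := mul_one _
      -- F₁ u₀ ≤ F₂ v   (via sInf ≤ F₂ v)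
      have h2 : F₁ u₀ ≤ F₂ v := by
        have hmem : ((F₂ v)⁻¹ • v) ∈ μ '' {u | F₁ u ≤ 1} := by
          rw [h]
          show F₂ _ ≤ 1
          rw [hF₂h _ (inv_pos.mpr ht), inv_mul_cancel₀ ht.ne']
        obtain ⟨u, hu1, hμu⟩ := hmem
        have hμ : μ (F₂ v • u) = v := by
          rw [map_smul, hμu, smul_smul, mul_inv_cancel₀ ht.ne', one_smul]
        have hF : F₁ (F₂ v • u) ≤ F₂ v := by
          rw [hF₁h _ ht]
          calc F₂ v * F₁ u ≤ F₂ v * 1 := mul_le_mul_of_nonneg_left hu1 ht.le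
          _ = F₂ v := mul_one _
        calc F₁ u₀ = sInf (F₁ '' {u | μ u = v}) := hinf
        _ ≤ F₁ (F₂ v • u) := csInf_le (hbdd v) ⟨_, hμ, rfl⟩
        _ ≤ F₂ v := hF
      rw [← hinf]
      linarith
  · intro hG
    ext v
    simp only [Set.mem_image, Set.mem_setOf_eq]
    constructor
    · rintro ⟨u, hu1, rfl⟩
      calc F₂ (μ u) = sInf (F₁ '' {u' | μ u' = μ u}) := hG (μ u)
      _ ≤ F₁ u := csInf_le (hbdd (μ u)) ⟨u, rfl, rfl⟩
      _ ≤ 1 := hu1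
    · intro hv
      obtain ⟨u₀, hu₀, hinf⟩ := key v
      exact ⟨u₀, by rw [hinf, ← hG v]; exact hv, hu₀⟩
end

section
/- Let V₁ be a finite-dimensional real normed space, F₁ : V₁ → ℝ a continuous, positively 1-homogeneous function with F₁(u) > 0 for all u ≠ 0 which is moreover convex and strictly convex off rays, let V₂ be a real vector space and μ : V₁ → V₂ a surjective linear map. Then for every v ∈ V₂ with v ≠ 0 there is exactly one u₀ ∈ V₁ with μ(u₀) = v and F₁(u₀) = inf{F₁(u) : μ(u) = v}. -/
/-- If F₁ is moreover convex and strictly convex off rays, the minimizer over each fibre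
over a nonzero point is unique. -/
theorem stmt_6 {V₁ V₂ : Type*}
    [NormedAddCommGroup V₁] [NormedSpace ℝ V₁] [FiniteDimensional ℝ V₁]
    [AddCommGroup V₂] [Module ℝ V₂]
    (F₁ : V₁ → ℝ) (hF₁c : Continuous F₁)
    (hF₁h : ∀ l : ℝ, 0 < l → ∀ u, F₁ (l • u) = l * F₁ u)
    (hF₁p : ∀ u : V₁, u ≠ 0 → 0 < F₁ u)
    (hconv : ∀ u u' : V₁, ∀ t ∈ Set.Icc (0:ℝ) 1,
      F₁ (t • u + (1 - t) • u') ≤ t * F₁ u + (1 - t) * F₁ u')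
    (hstrict : ∀ u u' : V₁, ∀ t ∈ Set.Ioo (0:ℝ) 1,
      ¬ (∃ α : ℝ, 0 ≤ α ∧ u = α • u') → ¬ (∃ α : ℝ, 0 ≤ α ∧ u' = α • u) →
      F₁ (t • u + (1 - t) • u') < t * F₁ u + (1 - t) * F₁ u')
    (μ : V₁ →ₗ[ℝ] V₂) (hsurj : Function.Surjective μ) :
    ∀ v : V₂, v ≠ 0 →
      ∃! u₀ : V₁, μ u₀ = v ∧ F₁ u₀ = sInf (F₁ '' {u | μ u = v}) := by
  intro v hv
  obtain ⟨u₁, hu₁⟩ := hsurj v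
  have hu₁0 : u₁ ≠ 0 := by rintro rfl; simp at hu₁; exact hv hu₁.symm
  have hF0 : F₁ 0 = 0 := by
    have h := hF₁h 2 (by norm_num) 0
    simp at h; linarith
  have hsph : (Metric.sphere (0:V₁) 1).Nonempty := by
    refine ⟨‖u₁‖⁻¹ • u₁, ?_⟩
    simp [norm_smul, inv_mul_cancel₀ (norm_ne_zero_iff.mpr hu₁0)]
  obtain ⟨z, hz, hzmin⟩ := (isCompact_sphere (0:V₁) 1).exists_isMinOn hsph hF₁c.continuousOn
  set c := F₁ z with hc
  have hz0 : z ≠ 0 := by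
    intro h; rw [h] at hz; simp at hz
  have hc0 : 0 < c := hF₁p z hz0
  have hlow : ∀ u : V₁, c * ‖u‖ ≤ F₁ u := by
    intro u
    rcases eq_or_ne u 0 with rfl | h0
    · simp [hF0]
    · have hn : (0:ℝ) < ‖u‖ := norm_pos_iff.mpr h0
      have hmem : ‖u‖⁻¹ • u ∈ Metric.sphere (0:V₁) 1 := by
        simp [norm_smul, inv_mul_cancel₀ hn.ne']
      have h1 : c ≤ F₁ (‖u‖⁻¹ • u) := hzmin hmem
      rw [hF₁h ‖u‖⁻¹ (by positivity) u] at h1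
      have h3 : ‖u‖⁻¹ * ‖u‖ = 1 := inv_mul_cancel₀ hn.ne'
      have h4 : c * ‖u‖ ≤ ‖u‖⁻¹ * F₁ u * ‖u‖ := mul_le_mul_of_nonneg_right h1 hn.le
      rw [mul_comm ‖u‖⁻¹ (F₁ u), mul_assoc, h3, mul_one] at h4
      exact h4
  set S : Set V₁ := {u | μ u = v} with hS
  have hSne : S.Nonempty := ⟨u₁, hu₁⟩
  have hSclosed : IsClosed S := by
    have hset : S = (fun u => u - u₁) ⁻¹' (LinearMap.ker μ : Set V₁) := by
      ext u
      simp [hS, LinearMap.mem_ker, map_sub, hu₁, sub_eq_zero]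
    rw [hset]
    exact (Submodule.closed_of_finiteDimensional _).preimage
      (continuous_id.sub continuous_const)
  set R : ℝ := (F₁ u₁ + 1) / c with hR
  have hcR : c * R = F₁ u₁ + 1 := by
    rw [hR]; field_simp
  have hu₁K : u₁ ∈ S ∩ Metric.closedBall 0 R := by
    refine ⟨hu₁, ?_⟩
    rw [Metric.mem_closedBall, dist_zero_right]
    have := hlow u₁
    rw [hR, le_div_iff₀ hc0]
    nlinarith
  have hKcpt : IsCompact (S ∩ Metric.closedBall 0 R) :=
    (isCompact_closedBall (0:V₁) R).inter_left hSclosed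
  obtain ⟨u₀, hu₀K, hu₀min⟩ := hKcpt.exists_isMinOn ⟨u₁, hu₁K⟩ hF₁c.continuousOn
  have hmin : ∀ u ∈ S, F₁ u₀ ≤ F₁ u := by
    intro u hu
    by_cases hball : u ∈ Metric.closedBall (0:V₁) R
    · exact hu₀min ⟨hu, hball⟩
    · have hgt : R < ‖u‖ := by
        rw [Metric.mem_closedBall, dist_zero_right, not_le] at hball
        exact hball
      have h1 : F₁ u₀ ≤ F₁ u₁ := hu₀min hu₁K
      have h2 := hlow u
      nlinarith
  have heq : F₁ u₀ = sInf (F₁ '' S) := by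
    refine le_antisymm (le_csInf (hSne.image _) ?_) (csInf_le ⟨F₁ u₀, ?_⟩ ⟨u₀, hu₀K.1, rfl⟩)
    · rintro _ ⟨u, hu, rfl⟩; exact hmin u hu
    · rintro _ ⟨u, hu, rfl⟩; exact hmin u hu
  have hu₀0 : u₀ ≠ 0 := by
    intro h; apply hv; rw [← hu₀K.1, h, map_zero]
  have hm0 : 0 < F₁ u₀ := hF₁p u₀ hu₀0
  refine ⟨u₀, ⟨hu₀K.1, heq⟩, ?_⟩
  rintro y ⟨hy1, hy2⟩
  have hyval : F₁ y = F₁ u₀ := by rw [hy2, heq]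
  have hy0 : y ≠ 0 := by intro h; apply hv; rw [← hy1, h, map_zero]
  by_contra hne
  by_cases hcase1 : ∃ α : ℝ, 0 ≤ α ∧ y = α • u₀
  · obtain ⟨α, hα0, hαy⟩ := hcase1
    have hαpos : 0 < α := by
      rcases hα0.lt_or_eq with h | h
      · exact h
      · exfalso; apply hy0; rw [hαy, ← h, zero_smul]
    have : F₁ y = α * F₁ u₀ := by rw [hαy, hF₁h α hαpos]
    have hα1 : α = 1 := by
      rw [hyval] at this; nlinarith
    exact hne (by rw [hαy, hα1, one_smul])
  by_cases hcase2 : ∃ α : ℝ, 0 ≤ α ∧ u₀ = α • y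
  · obtain ⟨α, hα0, hαy⟩ := hcase2
    have hαpos : 0 < α := by
      rcases hα0.lt_or_eq with h | h
      · exact h
      · exfalso; apply hu₀0; rw [hαy, ← h, zero_smul]
    have : F₁ u₀ = α * F₁ y := by rw [hαy, hF₁h α hαpos]
    have hα1 : α = 1 := by
      rw [hyval] at this; nlinarith
    exact hne (show u₀ = y by rw [hαy, hα1, one_smul]).symm
  · have hw : μ ((1/2 : ℝ) • y + (1 - 1/2 : ℝ) • u₀) = v := by
      rw [map_add, map_smul, map_smul, hy1, hu₀K.1]
      norm_num
      rw [← add_smul]; norm_num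
    have hwS : ((1/2 : ℝ) • y + (1 - 1/2 : ℝ) • u₀) ∈ S := hw
    have hlt := hstrict y u₀ (1/2) (by norm_num) hcase1 hcase2
    have hge := hmin _ hwS
    rw [hyval] at hlt
    linarith
end

section
/- Let V₁ be a finite-dimensional real normed space, F₁ : V₁ → ℝ a continuous, positively 1-homogeneous function with F₁(u) > 0 for all u ≠ 0 which is convex and strictly convex off rays, let V₂ be a real vector space and μ : V₁ → V₂ a surjective linear map. Then the subduced function F₂(v) = inf{F₁(u) : μ(u) = v} is strictly convex off rays: for all t ∈ (0,1) and all v, ṽ ∈ V₂ such that neither of v, ṽ is a nonnegative scalar multiple of the other, F₂(tv + (1−t)ṽ) < tF₂(v) + (1−t)F₂(ṽ). -/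
/-!
A continuous, positively homogeneous function that is positive off the origin grows at least
like `c‖u‖` (with `c` its minimum on the unit sphere), so it attains its minimum on every fibre
of `μ`; hence the infima defining `F₂` are attained. Taking minimizers `u`, `u'` over `v`, `v'`,
the point `t u + (1 - t) u'` lies over `t v + (1 - t) v'`, and `u`, `u'` are not on a common ray
because their images are not. Strict convexity of `F₁` off rays then gives the strict inequality.
-/

open Filter Topology

section Coercive

variable {V : Type*} [NormedAddCommGroup V] [NormedSpace ℝ V] [FiniteDimensional ℝ V]
  {F : V → ℝ}

lemma exists_pos_mul_norm_le_of_posHomogeneous (hFc : Continuous F)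
    (hFh : ∀ l : ℝ, 0 < l → ∀ u, F (l • u) = l * F u) (hFp : ∀ u : V, u ≠ 0 → 0 < F u) :
    ∃ c : ℝ, 0 < c ∧ ∀ u : V, c * ‖u‖ ≤ F u := by
  have hF0 : F 0 = 0 := by
    have h := hFh 2 two_pos 0
    rw [smul_zero] at h
    linarith
  rcases subsingleton_or_nontrivial V with hV | hV
  · exact ⟨1, one_pos, fun u => by simp [Subsingleton.elim u 0, hF0]⟩
  obtain ⟨x, hx⟩ := exists_norm_eq V zero_le_one
  obtain ⟨x₀, hx₀, hmin⟩ := (isCompact_sphere (0 : V) 1).exists_isMinOn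
    ⟨x, by simp [hx]⟩ hFc.continuousOn
  have hx₀ne : x₀ ≠ 0 := ne_zero_of_mem_unit_sphere ⟨x₀, hx₀⟩
  refine ⟨F x₀, hFp x₀ hx₀ne, fun u => ?_⟩
  rcases eq_or_ne u 0 with rfl | hu
  · simp [hF0]
  have hnu : 0 < ‖u‖ := norm_pos_iff.mpr hu
  have hunit : ‖u‖⁻¹ • u ∈ Metric.sphere (0 : V) 1 := by
    simp [norm_smul, inv_mul_cancel₀ hnu.ne']
  calc F x₀ * ‖u‖ ≤ ‖u‖ * F (‖u‖⁻¹ • u) := by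
        rw [mul_comm]; exact mul_le_mul_of_nonneg_left (hmin hunit) hnu.le
    _ = F u := by rw [← hFh _ hnu, smul_inv_smul₀ hnu.ne']

lemma tendsto_cocompact_atTop_of_posHomogeneous (hFc : Continuous F)
    (hFh : ∀ l : ℝ, 0 < l → ∀ u, F (l • u) = l * F u) (hFp : ∀ u : V, u ≠ 0 → 0 < F u) :
    Tendsto F (cocompact V) atTop := by
  obtain ⟨c, hc, hle⟩ := exists_pos_mul_norm_le_of_posHomogeneous hFc hFh hFp
  exact tendsto_atTop_mono hle (tendsto_norm_cocompact_atTop.const_mul_atTop hc)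

end Coercive

lemma LinearMap.isClosed_setOf_apply_eq {𝕜 E G : Type*} [NontriviallyNormedField 𝕜]
    [CompleteSpace 𝕜] [NormedAddCommGroup E] [NormedSpace 𝕜 E] [FiniteDimensional 𝕜 E]
    [AddCommGroup G] [Module 𝕜 G] (μ : E →ₗ[𝕜] G) (v : G) : IsClosed {u | μ u = v} := by
  rcases Set.eq_empty_or_nonempty {u | μ u = v} with h | ⟨u₀, hu₀⟩
  · rw [h]; exact isClosed_empty
  have hfib : {u | μ u = v} = (· - u₀) ⁻¹' (LinearMap.ker μ : Set E) := by
    ext u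
    simp [sub_eq_zero, hu₀.out]
  rw [hfib]
  exact (Submodule.closed_of_finiteDimensional _).preimage (continuous_sub_right u₀)

lemma exists_isMinOn_of_tendsto_cocompact {X : Type*} [TopologicalSpace X] {F : X → ℝ}
    (hFc : Continuous F) (hF : Tendsto F (cocompact X) atTop) {s : Set X} (hs : IsClosed s)
    (hne : s.Nonempty) : ∃ u ∈ s, IsMinOn F s u := by
  obtain ⟨u₀, hu₀⟩ := hne
  exact hFc.continuousOn.exists_isMinOn' hs hu₀
    ((hF.eventually_ge_atTop (F u₀)).filter_mono inf_le_left)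

lemma IsMinOn.csInf_image_eq {α β : Type*} [ConditionallyCompleteLinearOrder β] {f : α → β}
    {s : Set α} {a : α} (hmin : IsMinOn f s a) (ha : a ∈ s) : sInf (f '' s) = f a :=
  IsLeast.csInf_eq ⟨Set.mem_image_of_mem f ha, Set.forall_mem_image.2 hmin⟩

theorem stmt_8_general {V₁ V₂ : Type*}
    [NormedAddCommGroup V₁] [NormedSpace ℝ V₁] [FiniteDimensional ℝ V₁]
    [AddCommGroup V₂] [Module ℝ V₂]
    (F₁ : V₁ → ℝ) (hF₁c : Continuous F₁)
    (hF₁h : ∀ l : ℝ, 0 < l → ∀ u, F₁ (l • u) = l * F₁ u)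
    (hF₁p : ∀ u : V₁, u ≠ 0 → 0 < F₁ u)
    (hstrict : ∀ u u' : V₁, ∀ t ∈ Set.Ioo (0:ℝ) 1,
      ¬ (∃ α : ℝ, 0 ≤ α ∧ u = α • u') → ¬ (∃ α : ℝ, 0 ≤ α ∧ u' = α • u) →
      F₁ (t • u + (1 - t) • u') < t * F₁ u + (1 - t) * F₁ u')
    (μ : V₁ →ₗ[ℝ] V₂) (hsurj : Function.Surjective μ) :
    ∀ t ∈ Set.Ioo (0:ℝ) 1, ∀ v v' : V₂,
      ¬ (∃ α : ℝ, 0 ≤ α ∧ v = α • v') → ¬ (∃ α : ℝ, 0 ≤ α ∧ v' = α • v) →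
      sInf (F₁ '' {u | μ u = t • v + (1 - t) • v'})
        < t * sInf (F₁ '' {u | μ u = v}) + (1 - t) * sInf (F₁ '' {u | μ u = v'}) := by
  intro t ht v v' hv hv'
  have hF := tendsto_cocompact_atTop_of_posHomogeneous hF₁c hF₁h hF₁p
  have hattained : ∀ w : V₂, ∃ u, μ u = w ∧ IsMinOn F₁ {x | μ x = w} u := fun w =>
    exists_isMinOn_of_tendsto_cocompact hF₁c hF (μ.isClosed_setOf_apply_eq w) (hsurj w)
  obtain ⟨u, hu, hmin⟩ := hattained v
  obtain ⟨u', hu', hmin'⟩ := hattained v'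
  obtain ⟨m, hm, hminm⟩ := hattained (t • v + (1 - t) • v')
  rw [hmin.csInf_image_eq hu, hmin'.csInf_image_eq hu', hminm.csInf_image_eq hm]
  have hmid : μ (t • u + (1 - t) • u') = t • v + (1 - t) • v' := by simp [hu, hu']
  calc F₁ m ≤ F₁ (t • u + (1 - t) • u') := hminm hmid
    _ < t * F₁ u + (1 - t) * F₁ u' := hstrict u u' t ht
        (fun ⟨α, hα, h⟩ => hv ⟨α, hα, by rw [← hu, ← hu', h, map_smul]⟩)
        (fun ⟨α, hα, h⟩ => hv' ⟨α, hα, by rw [← hu, ← hu', h, map_smul]⟩)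

/-- The subduced function F₂(v) = inf{F₁(u) : μ(u) = v} is strictly convex off rays. -/
theorem stmt_8 {V₁ V₂ : Type*}
    [NormedAddCommGroup V₁] [NormedSpace ℝ V₁] [FiniteDimensional ℝ V₁]
    [AddCommGroup V₂] [Module ℝ V₂]
    (F₁ : V₁ → ℝ) (hF₁c : Continuous F₁)
    (hF₁h : ∀ l : ℝ, 0 < l → ∀ u, F₁ (l • u) = l * F₁ u)
    (hF₁p : ∀ u : V₁, u ≠ 0 → 0 < F₁ u)
    (hconv : ∀ u u' : V₁, ∀ t ∈ Set.Icc (0:ℝ) 1,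
      F₁ (t • u + (1 - t) • u') ≤ t * F₁ u + (1 - t) * F₁ u')
    (hstrict : ∀ u u' : V₁, ∀ t ∈ Set.Ioo (0:ℝ) 1,
      ¬ (∃ α : ℝ, 0 ≤ α ∧ u = α • u') → ¬ (∃ α : ℝ, 0 ≤ α ∧ u' = α • u) →
      F₁ (t • u + (1 - t) • u') < t * F₁ u + (1 - t) * F₁ u')
    (μ : V₁ →ₗ[ℝ] V₂) (hsurj : Function.Surjective μ) :
    ∀ t ∈ Set.Ioo (0:ℝ) 1, ∀ v v' : V₂,
      ¬ (∃ α : ℝ, 0 ≤ α ∧ v = α • v') → ¬ (∃ α : ℝ, 0 ≤ α ∧ v' = α • v) →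
      sInf (F₁ '' {u | μ u = t • v + (1 - t) • v'})
        < t * sInf (F₁ '' {u | μ u = v}) + (1 - t) * sInf (F₁ '' {u | μ u = v'}) :=
  stmt_8_general F₁ hF₁c hF₁h hF₁p hstrict μ hsurj
end

section
/- Let V₁ and V₂ be finite-dimensional real normed spaces, U ⊆ V₂ an open set, μ : V₁ → V₂ a surjective continuous linear map, h : U → V₁ a C¹ map with μ(h(v)) = v for all v ∈ U, and E₁ : V₁ → ℝ a C² function such that DE₁(h(v))(w) = 0 for all v ∈ U and all w ∈ ker μ. Then E₂ := E₁ ∘ h is twice differentiable on U and its second derivative satisfies, for all v ∈ U and all x, y ∈ V₂, D²E₂(v)(x, y) = D²E₁(h(v))(Dh(v)(x), Dh(v)(y)). -/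
/-! Fix `v ∈ U`. Differentiating `μ ∘ h = id` shows that `Dh(z) - Dh(v)` takes values in `ker μ`
for every `z ∈ U`, and `DE₁(h z)` vanishes there, so near `v`
`DE₂(z) = DE₁(h z) ∘ Dh(v)`, with the derivative of `h` frozen at `v`. The right-hand side is
differentiable (only `DE₁ ∘ h` varies), and differentiating it at `v` gives the formula. -/

open Filter Topology

section

variable {𝕜 E F G : Type*} [NontriviallyNormedField 𝕜]
  [NormedAddCommGroup E] [NormedSpace 𝕜 E] [NormedAddCommGroup F] [NormedSpace 𝕜 F]
  [NormedAddCommGroup G] [NormedSpace 𝕜 G]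

theorem comp_fderiv_eq_id_of_eventually_leftInverse {μ : E →L[𝕜] F} {h : F → E} {z : F}
    (hsec : ∀ᶠ w in 𝓝 z, μ (h w) = w) (hh : DifferentiableAt 𝕜 h z) :
    μ.comp (fderiv 𝕜 h z) = ContinuousLinearMap.id 𝕜 F :=
  (μ.hasFDerivAt.comp z hh.hasFDerivAt).unique ((hasFDerivAt_id z).congr_of_eventuallyEq hsec)

theorem ContinuousLinearMap.comp_eq_comp_of_ker_le_ker {μ : E →L[𝕜] F} {φ : E →L[𝕜] G}
    (hker : ∀ w ∈ LinearMap.ker (μ : E →ₗ[𝕜] F), φ w = 0) {A B : F →L[𝕜] E}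
    (hAB : μ.comp A = μ.comp B) : φ.comp A = φ.comp B := by
  ext x
  have hx : A x - B x ∈ LinearMap.ker (μ : E →ₗ[𝕜] F) := by
    simpa [sub_eq_zero] using congrArg (· x) hAB
  simpa [sub_eq_zero] using hker _ hx

theorem fderiv_comp_eventuallyEq_comp_fderiv_at {μ : E →L[𝕜] F} {U : Set F} (hU : IsOpen U)
    {h : F → E} (hh : DifferentiableOn 𝕜 h U) (hsec : ∀ z ∈ U, μ (h z) = z)
    {E₁ : E → G} (hE₁ : Differentiable 𝕜 E₁)
    (hcrit : ∀ z ∈ U, ∀ w ∈ LinearMap.ker (μ : E →ₗ[𝕜] F), fderiv 𝕜 E₁ (h z) w = 0)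
    {v : F} (hv : v ∈ U) :
    fderiv 𝕜 (fun z => E₁ (h z)) =ᶠ[𝓝 v]
      fun z => (fderiv 𝕜 E₁ (h z)).comp (fderiv 𝕜 h v) := by
  have hsec_nhds : ∀ z ∈ U, ∀ᶠ w in 𝓝 z, μ (h w) = w := fun z hz =>
    eventually_of_mem (hU.mem_nhds hz) hsec
  have hdiff : ∀ z ∈ U, DifferentiableAt 𝕜 h z := fun z hz =>
    hh.differentiableAt (hU.mem_nhds hz)
  filter_upwards [hU.mem_nhds hv] with z hz
  rw [fderiv_fun_comp z (hE₁ (h z)) (hdiff z hz)]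
  refine ContinuousLinearMap.comp_eq_comp_of_ker_le_ker (hcrit z hz) ?_
  rw [comp_fderiv_eq_id_of_eventually_leftInverse (hsec_nhds z hz) (hdiff z hz),
    comp_fderiv_eq_id_of_eventually_leftInverse (hsec_nhds v hv) (hdiff v hv)]

theorem hasFDerivAt_fderiv_comp_of_section {μ : E →L[𝕜] F} {U : Set F} (hU : IsOpen U)
    {h : F → E} (hh : DifferentiableOn 𝕜 h U) (hsec : ∀ z ∈ U, μ (h z) = z)
    {E₁ : E → G} (hE₁ : ContDiff 𝕜 2 E₁)
    (hcrit : ∀ z ∈ U, ∀ w ∈ LinearMap.ker (μ : E →ₗ[𝕜] F), fderiv 𝕜 E₁ (h z) w = 0)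
    {v : F} (hv : v ∈ U) :
    HasFDerivAt (fderiv 𝕜 (fun z => E₁ (h z)))
      ((ContinuousLinearMap.compL 𝕜 F E G).flip (fderiv 𝕜 h v) ∘L
        (fderiv 𝕜 (fderiv 𝕜 E₁) (h v) ∘L fderiv 𝕜 h v)) v := by
  have hDE₁ : Differentiable 𝕜 (fderiv 𝕜 E₁) :=
    (hE₁.fderiv_right (m := 1) le_rfl).differentiable one_ne_zero
  have hDE₁h : HasFDerivAt (fun z => fderiv 𝕜 E₁ (h z))
      (fderiv 𝕜 (fderiv 𝕜 E₁) (h v) ∘L fderiv 𝕜 h v) v :=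
    (hDE₁ (h v)).hasFDerivAt.comp v (hh.differentiableAt (hU.mem_nhds hv)).hasFDerivAt
  exact (((ContinuousLinearMap.compL 𝕜 F E G).flip (fderiv 𝕜 h v)).hasFDerivAt.comp v
    hDE₁h).congr_of_eventuallyEq
      (fderiv_comp_eventuallyEq_comp_fderiv_at hU hh hsec
        (hE₁.differentiable two_ne_zero) hcrit hv)

end

theorem stmt_11_general {V₁ V₂ : Type*}
    [NormedAddCommGroup V₁] [NormedSpace ℝ V₁]
    [NormedAddCommGroup V₂] [NormedSpace ℝ V₂]
    (U : Set V₂) (hUopen : IsOpen U) (μ : V₁ →L[ℝ] V₂)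
    (h : V₂ → V₁) (hC1 : ContDiffOn ℝ 1 h U)
    (hsec : ∀ v ∈ U, μ (h v) = v)
    (E₁ : V₁ → ℝ) (hE₁ : ContDiff ℝ 2 E₁)
    (hcrit : ∀ v ∈ U, ∀ w ∈ LinearMap.ker (μ : V₁ →ₗ[ℝ] V₂), fderiv ℝ E₁ (h v) w = 0) :
    ∀ v ∈ U,
      DifferentiableAt ℝ (fun z => E₁ (h z)) v ∧
      DifferentiableAt ℝ (fderiv ℝ (fun z => E₁ (h z))) v ∧
      (∀ x y : V₂,
        fderiv ℝ (fderiv ℝ (fun z => E₁ (h z))) v x y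
          = fderiv ℝ (fderiv ℝ E₁) (h v) (fderiv ℝ h v x) (fderiv ℝ h v y)) := by
  intro v hv
  have hh : DifferentiableOn ℝ h U := hC1.differentiableOn one_ne_zero
  have hD2 := hasFDerivAt_fderiv_comp_of_section hUopen hh hsec hE₁ hcrit hv
  refine ⟨(hE₁.differentiable two_ne_zero (h v)).comp v
    (hh.differentiableAt (hUopen.mem_nhds hv)), hD2.differentiableAt, fun x y => ?_⟩
  rw [hD2.fderiv]
  rfl

/-- If h is a C¹ section of μ on an open set U and DE₁(h(v)) annihilates ker μ on U,
then E₂ = E₁ ∘ h is twice differentiable on U and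
D²E₂(v)(x,y) = D²E₁(h(v))(Dh(v)x, Dh(v)y). -/
theorem stmt_11 {V₁ V₂ : Type*}
    [NormedAddCommGroup V₁] [NormedSpace ℝ V₁] [FiniteDimensional ℝ V₁]
    [NormedAddCommGroup V₂] [NormedSpace ℝ V₂] [FiniteDimensional ℝ V₂]
    (U : Set V₂) (hUopen : IsOpen U) (μ : V₁ →L[ℝ] V₂) (hsurj : Function.Surjective μ)
    (h : V₂ → V₁) (hC1 : ContDiffOn ℝ 1 h U)
    (hsec : ∀ v ∈ U, μ (h v) = v)
    (E₁ : V₁ → ℝ) (hE₁ : ContDiff ℝ 2 E₁)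
    (hcrit : ∀ v ∈ U, ∀ w ∈ LinearMap.ker (μ : V₁ →ₗ[ℝ] V₂), fderiv ℝ E₁ (h v) w = 0) :
    ∀ v ∈ U,
      DifferentiableAt ℝ (fun z => E₁ (h z)) v ∧
      DifferentiableAt ℝ (fderiv ℝ (fun z => E₁ (h z))) v ∧
      (∀ x y : V₂,
        fderiv ℝ (fderiv ℝ (fun z => E₁ (h z))) v x y
          = fderiv ℝ (fderiv ℝ E₁) (h v) (fderiv ℝ h v x) (fderiv ℝ h v y)) :=
  stmt_11_general U hUopen μ h hC1 hsec E₁ hE₁ hcrit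
end

section
/- Define L₁, L₂ : ℝ⁶ → ℝ by L₁(w) = (w₁+w₄)² + (w₂+w₅)² + (w₃+w₆)² and L₂(w) = (w₁−w₄)² + (w₂−w₅)² + (w₃−w₆)². Then the function w ↦ √(L₁(w)² + L₂(w)²) is strictly convex on ℝ⁶: for all w ≠ w̃ in ℝ⁶ and all t ∈ (0,1), its value at tw + (1−t)w̃ is strictly less than t times its value at w plus (1−t) times its value at w̃. -/
/-- The basic Ad-invariant polynomial L₁ on 𝔰𝔬(4) ≅ ℝ⁶. -/
noncomputable def Linv₁ (w : Fin 6 → ℝ) : ℝ :=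
  (w 0 + w 3) ^ 2 + (w 1 + w 4) ^ 2 + (w 2 + w 5) ^ 2

/-- The basic Ad-invariant polynomial L₂ on 𝔰𝔬(4) ≅ ℝ⁶. -/
noncomputable def Linv₂ (w : Fin 6 → ℝ) : ℝ :=
  (w 0 - w 3) ^ 2 + (w 1 - w 4) ^ 2 + (w 2 - w 5) ^ 2

lemma quad_le (t s p1 p2 p3 q1 q2 q3 : ℝ) (ht : 0 < t) (hs : 0 < s) (hts : t + s = 1) :
    (t*p1+s*q1)^2+(t*p2+s*q2)^2+(t*p3+s*q3)^2
      ≤ t*(p1^2+p2^2+p3^2) + s*(q1^2+q2^2+q3^2) := by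
  nlinarith [sq_nonneg (p1-q1), sq_nonneg (p2-q2), sq_nonneg (p3-q3), mul_pos ht hs]

lemma quad_lt (t s p1 p2 p3 q1 q2 q3 : ℝ) (ht : 0 < t) (hs : 0 < s) (hts : t + s = 1)
    (h : p1 ≠ q1 ∨ p2 ≠ q2 ∨ p3 ≠ q3) :
    (t*p1+s*q1)^2+(t*p2+s*q2)^2+(t*p3+s*q3)^2
      < t*(p1^2+p2^2+p3^2) + s*(q1^2+q2^2+q3^2) := by
  rcases h with h | h | h <;>
  · have h0 := sub_ne_zero.mpr h
    have h' : (0:ℝ) < (p1-q1)^2 ∨ (0:ℝ) < (p2-q2)^2 ∨ (0:ℝ) < (p3-q3)^2 := by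
      first
      | exact Or.inl (by positivity)
      | exact Or.inr (Or.inl (by positivity))
      | exact Or.inr (Or.inr (by positivity))
    rcases h' with h' | h' | h' <;>
    nlinarith [sq_nonneg (p1-q1), sq_nonneg (p2-q2), sq_nonneg (p3-q3), mul_pos ht hs]

lemma sqrt_two_lt (a b x y : ℝ) (ha : 0 ≤ a) (hb : 0 ≤ b) (hax : a ≤ x) (hby : b ≤ y)
    (h : a < x ∨ b < y) :
    Real.sqrt (a^2+b^2) < Real.sqrt (x^2+y^2) := by
  apply Real.sqrt_lt_sqrt (by positivity)
  rcases h with h | h <;> nlinarith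

lemma mink (a b c d : ℝ) (ha : 0 ≤ a) (hb : 0 ≤ b) (hc : 0 ≤ c) (hd : 0 ≤ d) :
    Real.sqrt ((a+c)^2+(b+d)^2) ≤ Real.sqrt (a^2+b^2) + Real.sqrt (c^2+d^2) := by
  have hcs : a*c+b*d ≤ Real.sqrt (a^2+b^2) * Real.sqrt (c^2+d^2) := by
    rw [← Real.sqrt_mul (by positivity)]
    have h3 : (a*c+b*d)^2 ≤ (a^2+b^2)*(c^2+d^2) := by nlinarith [sq_nonneg (a*d-b*c)]
    have h4 : a*c+b*d ≤ Real.sqrt ((a*c+b*d)^2) := by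
      rw [Real.sqrt_sq (by positivity)]
    exact h4.trans (Real.sqrt_le_sqrt h3)
  have hs1 := Real.sq_sqrt (show (0:ℝ) ≤ a^2+b^2 by positivity)
  have hs2 := Real.sq_sqrt (show (0:ℝ) ≤ c^2+d^2 by positivity)
  calc Real.sqrt ((a+c)^2+(b+d)^2)
      ≤ Real.sqrt ((Real.sqrt (a^2+b^2) + Real.sqrt (c^2+d^2))^2) :=
        Real.sqrt_le_sqrt (by nlinarith)
    _ = _ := Real.sqrt_sq (by positivity)

/-- The function w ↦ √(L₁(w)² + L₂(w)²) is strictly convex on ℝ⁶. -/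
theorem stmt_16 :
    ∀ w w' : Fin 6 → ℝ, w ≠ w' → ∀ t ∈ Set.Ioo (0:ℝ) 1,
      Real.sqrt (Linv₁ (t • w + (1 - t) • w') ^ 2 + Linv₂ (t • w + (1 - t) • w') ^ 2)
        < t * Real.sqrt (Linv₁ w ^ 2 + Linv₂ w ^ 2)
          + (1 - t) * Real.sqrt (Linv₁ w' ^ 2 + Linv₂ w' ^ 2) := by
  intro w w' hne t ht
  obtain ⟨ht0, ht1⟩ := ht
  set s : ℝ := 1 - t with hs_def
  have hs0 : 0 < s := by simp [hs_def]; linarith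
  have hts : t + s = 1 := by simp [hs_def]
  set A := Linv₁ w with hA
  set B := Linv₂ w with hB
  set A' := Linv₁ w' with hA'
  set B' := Linv₂ w' with hB'
  have hAnn : 0 ≤ A := by rw [hA, Linv₁]; positivity
  have hBnn : 0 ≤ B := by rw [hB, Linv₂]; positivity
  have hA'nn : 0 ≤ A' := by rw [hA', Linv₁]; positivity
  have hB'nn : 0 ≤ B' := by rw [hB', Linv₂]; positivity
  have hm1 : Linv₁ (t • w + s • w') =
      (t*(w 0 + w 3)+s*(w' 0 + w' 3))^2 + (t*(w 1 + w 4)+s*(w' 1 + w' 4))^2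
        + (t*(w 2 + w 5)+s*(w' 2 + w' 5))^2 := by
    simp only [Linv₁, Pi.add_apply, Pi.smul_apply, smul_eq_mul]; ring
  have hm2 : Linv₂ (t • w + s • w') =
      (t*(w 0 - w 3)+s*(w' 0 - w' 3))^2 + (t*(w 1 - w 4)+s*(w' 1 - w' 4))^2
        + (t*(w 2 - w 5)+s*(w' 2 - w' 5))^2 := by
    simp only [Linv₂, Pi.add_apply, Pi.smul_apply, smul_eq_mul]; ring
  have hL1nn : 0 ≤ Linv₁ (t • w + s • w') := by rw [hm1]; positivity
  have hL2nn : 0 ≤ Linv₂ (t • w + s • w') := by rw [hm2]; positivity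
  have hle1 : Linv₁ (t • w + s • w') ≤ t*A + s*A' := by
    rw [hm1, hA, Linv₁]
    exact quad_le t s _ _ _ _ _ _ ht0 hs0 hts
  have hle2 : Linv₂ (t • w + s • w') ≤ t*B + s*B' := by
    rw [hm2, hB, Linv₂]
    exact quad_le t s _ _ _ _ _ _ ht0 hs0 hts
  -- strictness in at least one of the two
  have hstrict : Linv₁ (t • w + s • w') < t*A + s*A' ∨ Linv₂ (t • w + s • w') < t*B + s*B' := by
    by_cases hsum : w 0 + w 3 = w' 0 + w' 3 ∧ w 1 + w 4 = w' 1 + w' 4 ∧ w 2 + w 5 = w' 2 + w' 5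
    · right
      rw [hm2, hB, hB', Linv₂, Linv₂]
      apply quad_lt t s _ _ _ _ _ _ ht0 hs0 hts
      by_contra hdiff
      push_neg at hdiff
      obtain ⟨d1, d2, d3⟩ := hdiff
      obtain ⟨s1, s2, s3⟩ := hsum
      apply hne
      funext i
      fin_cases i <;> simp <;> linarith
    · left
      rw [hm1, hA, hA', Linv₁, Linv₁]
      apply quad_lt t s _ _ _ _ _ _ ht0 hs0 hts
      by_contra hdiff
      push_neg at hdiff
      obtain ⟨s1, s2, s3⟩ := hdiff
      exact hsum ⟨s1, s2, s3⟩
  have step1 : Real.sqrt (Linv₁ (t • w + s • w') ^ 2 + Linv₂ (t • w + s • w') ^ 2)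
      < Real.sqrt ((t*A + s*A')^2 + (t*B + s*B')^2) :=
    sqrt_two_lt _ _ _ _ hL1nn hL2nn hle1 hle2 hstrict
  have step2 : Real.sqrt ((t*A + s*A')^2 + (t*B + s*B')^2)
      ≤ Real.sqrt ((t*A)^2 + (t*B)^2) + Real.sqrt ((s*A')^2 + (s*B')^2) :=
    mink (t*A) (t*B) (s*A') (s*B') (by positivity) (by positivity) (by positivity)
      (by positivity)
  have e1 : Real.sqrt ((t*A)^2 + (t*B)^2) = t * Real.sqrt (A^2 + B^2) := by
    rw [show (t*A)^2 + (t*B)^2 = t^2 * (A^2+B^2) by ring, Real.sqrt_mul (by positivity),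
      Real.sqrt_sq ht0.le]
  have e2 : Real.sqrt ((s*A')^2 + (s*B')^2) = s * Real.sqrt (A'^2 + B'^2) := by
    rw [show (s*A')^2 + (s*B')^2 = s^2 * (A'^2+B'^2) by ring, Real.sqrt_mul (by positivity),
      Real.sqrt_sq hs0.le]
  calc Real.sqrt (Linv₁ (t • w + s • w') ^ 2 + Linv₂ (t • w + s • w') ^ 2)
      < Real.sqrt ((t*A + s*A')^2 + (t*B + s*B')^2) := step1
    _ ≤ Real.sqrt ((t*A)^2 + (t*B)^2) + Real.sqrt ((s*A')^2 + (s*B')^2) := step2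
    _ = t * Real.sqrt (A^2 + B^2) + s * Real.sqrt (A'^2 + B'^2) := by rw [e1, e2]
end

section
/- Consider F₁ : ℝ² → ℝ, F₁(v,w) = √(2v² + 2vw + 2w²) + v + w. For every v > 0, the function w ↦ F₁(v,w) attains its infimum over ℝ at the unique point w = −(1+√3)v/2 = v/(1−√3), and the minimum value equals (√3+1)v/2 = v/(√3−1). For every v < 0, it attains its infimum at the unique point w = (√3−1)v/2 = v/(1+√3), and the minimum value equals −(√3−1)v/2 = v/(−1−√3). -/
/-- The Randers-type Minkowski norm F₁(v,w) = √(2v² + 2vw + 2w²) + v + w on ℝ². -/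
noncomputable def Frand (v w : ℝ) : ℝ := Real.sqrt (2 * v ^ 2 + 2 * v * w + 2 * w ^ 2) + v + w

/-!
Completing the square: if `m` solves `2m² = 2mv + v²`, then
`2v² + 2vw + 2w² = (m - v - w)² + (w + m)²` for every `w`, so
`F₁(v,w) = m - (m - v - w) + √((m - v - w)² + (w + m)²) ≥ m`, with equality exactly when
`w = -m` and `m - v - w ≥ 0`, i.e. `2m ≥ v`. The root `m = (1 + √3)v/2` qualifies for `v > 0`
and `m = (1 - √3)v/2` for `v < 0`.
-/

lemma Real.le_sqrt_sq_add_sq (x y : ℝ) : x ≤ √(x ^ 2 + y ^ 2) :=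
  Real.le_sqrt_of_sq_le (le_add_of_nonneg_right (sq_nonneg y))

lemma Real.eq_zero_of_sqrt_sq_add_sq_eq {x y : ℝ} (h : √(x ^ 2 + y ^ 2) = x) : y = 0 := by
  have hx : 0 ≤ x := h ▸ Real.sqrt_nonneg _
  rw [Real.sqrt_eq_iff_eq_sq (by positivity) hx] at h
  exact pow_eq_zero_iff two_ne_zero |>.mp (by linarith)

section CompletingTheSquare

variable {v m w₀ : ℝ} (hm : 2 * m ^ 2 = 2 * m * v + v ^ 2) (hw₀ : w₀ = -m)
include hm hw₀

lemma Frand_eq_add_sqrt (w : ℝ) :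
    Frand v w = v + w + √((m - v - w) ^ 2 + (w - w₀) ^ 2) := by
  have hsq : 2 * v ^ 2 + 2 * v * w + 2 * w ^ 2 = (m - v - w) ^ 2 + (w - w₀) ^ 2 := by
    rw [hw₀]
    linear_combination -hm
  rw [Frand, hsq]
  ring

lemma le_Frand (w : ℝ) : m ≤ Frand v w := by
  rw [Frand_eq_add_sqrt hm hw₀]
  linarith [Real.le_sqrt_sq_add_sq (m - v - w) (w - w₀)]

lemma eq_of_Frand_eq {w : ℝ} (h : Frand v w = m) : w = w₀ := by
  rw [Frand_eq_add_sqrt hm hw₀] at h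
  exact sub_eq_zero.mp (Real.eq_zero_of_sqrt_sq_add_sq_eq (x := m - v - w) (by linarith))

lemma Frand_eq (hv : v ≤ 2 * m) : Frand v w₀ = m := by
  rw [Frand_eq_add_sqrt hm hw₀, sub_self, zero_pow two_ne_zero, add_zero,
    Real.sqrt_sq (by linarith)]
  ring

lemma Frand_isMinimizer (hv : v ≤ 2 * m) :
    (∀ w, Frand v w₀ ≤ Frand v w) ∧ (∀ w, Frand v w = Frand v w₀ → w = w₀) ∧
      Frand v w₀ = m := by
  have hmin := Frand_eq hm hw₀ hv
  exact ⟨fun w ↦ hmin ▸ le_Frand hm hw₀ w, fun w h ↦ eq_of_Frand_eq hm hw₀ (hmin ▸ h), hmin⟩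

end CompletingTheSquare

/-- For v > 0, w ↦ F₁(v,w) attains its infimum over ℝ at the unique point
w = −(1+√3)v/2 = v/(1−√3), with minimum value (√3+1)v/2 = v/(√3−1); for v < 0, at the
unique point w = (√3−1)v/2 = v/(1+√3), with minimum value −(√3−1)v/2 = v/(−1−√3). -/
theorem stmt_18 :
    (∀ v : ℝ, 0 < v →
      (-(1 + Real.sqrt 3) * v / 2 = v / (1 - Real.sqrt 3)) ∧
      (∀ w : ℝ, Frand v (-(1 + Real.sqrt 3) * v / 2) ≤ Frand v w) ∧
      (∀ w : ℝ, Frand v w = Frand v (-(1 + Real.sqrt 3) * v / 2) →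
        w = -(1 + Real.sqrt 3) * v / 2) ∧
      Frand v (-(1 + Real.sqrt 3) * v / 2) = (Real.sqrt 3 + 1) * v / 2 ∧
      (Real.sqrt 3 + 1) * v / 2 = v / (Real.sqrt 3 - 1)) ∧
    (∀ v : ℝ, v < 0 →
      ((Real.sqrt 3 - 1) * v / 2 = v / (1 + Real.sqrt 3)) ∧
      (∀ w : ℝ, Frand v ((Real.sqrt 3 - 1) * v / 2) ≤ Frand v w) ∧
      (∀ w : ℝ, Frand v w = Frand v ((Real.sqrt 3 - 1) * v / 2) →
        w = (Real.sqrt 3 - 1) * v / 2) ∧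
      Frand v ((Real.sqrt 3 - 1) * v / 2) = -(Real.sqrt 3 - 1) * v / 2 ∧
      (-(Real.sqrt 3 - 1) * v / 2 = v / (-1 - Real.sqrt 3))) := by
  have hs3 : √3 ^ 2 = 3 := Real.sq_sqrt (by norm_num)
  have hs1 : 1 < √3 := by nlinarith [Real.sqrt_nonneg 3]
  constructor
  · intro v hv
    obtain ⟨hle, huniq, hval⟩ := Frand_isMinimizer (v := v) (m := (√3 + 1) * v / 2) (w₀ := -(1 + √3) * v / 2)
      (by linear_combination v ^ 2 / 2 * hs3) (by ring) (by nlinarith)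
    refine ⟨?_, hle, huniq, hval, ?_⟩
    · rw [eq_div_iff (by linarith)]
      linear_combination v / 2 * hs3
    · rw [eq_div_iff (by linarith)]
      linear_combination v / 2 * hs3
  · intro v hv
    obtain ⟨hle, huniq, hval⟩ := Frand_isMinimizer (v := v) (m := -(√3 - 1) * v / 2) (w₀ := (√3 - 1) * v / 2)
      (by linear_combination v ^ 2 / 2 * hs3) (by ring) (by nlinarith)
    refine ⟨?_, hle, huniq, hval, ?_⟩
    · rw [eq_div_iff (by linarith)]
      linear_combination v / 2 * hs3
    · rw [eq_div_iff (by linarith)]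
      linear_combination v / 2 * hs3
end
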